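/- Let Γ = (V,R) be a graph and G a profinite group topologically isomorphic to G_Γ. Suppose given a bijection v ↦ N_v from V onto {N : N a closed normal subgroup of G with G/N ≅ D_p} and a bijection r ↦ M_r from R onto {M : M a closed normal subgroup of G with G/M ≅ W}, satisfying: (1) for each v ∈ V there is an isomorphism φ_v : G_Γ/ker(π_v) → G/N_v; (2) for each r = (v,v') ∈ R one has M_r ⊆ N_v ∩ N_{v'}, and there is an isomorphism φ_r : G_Γ/ker(π_r) → G/M_r such that the canonical map G/M_r → G/N_v × G/N_{v'} composed with φ_r equals (φ_v × φ_{v'}) composed with the canonical map G_Γ/ker(π_r) → G_Γ/ker(π_v) × G_Γ/ker(π_{v'}). Then there is a unique continuous isomorphism φ : G_Γ → G which induces φ_v on G_Γ/ker(π_v) for each v ∈ V and induces φ_r on G_Γ/ker(π_r) for each r ∈ R. -/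

import Mathlib

open Function

noncomputable section

/-- A discrete group is a topological group. -/
instance (priority := 50) discreteTopologicalGroup (G : Type*) [Group G] [TopologicalSpace G]
    [DiscreteTopology G] : IsTopologicalGroup G where
  continuous_mul := continuous_of_discreteTopology
  continuous_inv := continuous_of_discreteTopology

/-- The sign epimorphism `τ : D_p → C_2 = {±1}` killing the rotations. -/
def dihedralSign (p : ℕ) : DihedralGroup p →* ℤˣ where
  toFun x := match x with
    | DihedralGroup.r _ => 1
    | DihedralGroup.sr _ => -1
  map_one' := rfl
  map_mul' a b := by cases a <;> cases b <;> rfl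

/-- `{±1}` acts on a commutative group by exponentiation (i.e. `-1` acts by inversion). -/
def unitsIntAut (A : Type*) [CommGroup A] : ℤˣ →* MulAut A where
  toFun u :=
    { toFun := fun x => x ^ (u : ℤ)
      invFun := fun x => x ^ (u : ℤ)
      left_inv := fun x => by rcases Int.units_eq_one_or u with h | h <;> simp [h]
      right_inv := fun x => by rcases Int.units_eq_one_or u with h | h <;> simp [h]
      map_mul' := fun x y => mul_zpow x y _ }
  map_one' := by ext x; simp
  map_mul' u v := by
    ext x
    rcases Int.units_eq_one_or u with h | h <;>
      rcases Int.units_eq_one_or v with h' | h' <;>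
        simp [h, h']

/-- The action of `D_p × D_p` on `C_q` given by `(x,y) · g = g^(τ(x)τ(y))`. -/
def Wact (p q : ℕ) : DihedralGroup p × DihedralGroup p →* MulAut (Multiplicative (ZMod q)) :=
  (unitsIntAut (Multiplicative (ZMod q))).comp
    (((dihedralSign p).comp (MonoidHom.fst _ _)) * ((dihedralSign p).comp (MonoidHom.snd _ _)))

/-- The group `W = C_q ⋊ (D_p × D_p)`. -/
abbrev Wgrp (p q : ℕ) : Type :=
  SemidirectProduct (Multiplicative (ZMod q)) (DihedralGroup p × DihedralGroup p) (Wact p q)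

/-- The quotient map `λ : W → D_p × D_p`. -/
abbrev lamW (p q : ℕ) : Wgrp p q →* DihedralGroup p × DihedralGroup p :=
  SemidirectProduct.rightHom

/-- The group `G_Γ ≤ D_p^V × W^R` associated to a graph `Γ = (V, R)`. -/
def GGamma (p q : ℕ) (V : Type*) (R : Set (V × V)) :
    Subgroup ((V → DihedralGroup p) × (R → Wgrp p q)) where
  carrier := {x | ∀ r : R,
    SemidirectProduct.rightHom (x.2 r) = (x.1 (r : V × V).1, x.1 (r : V × V).2)}
  one_mem' := by intro r; simp; rfl
  mul_mem' := by
    intro a b ha hb r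
    simp only [Set.mem_setOf_eq] at ha hb
    simp only [Prod.snd_mul, Pi.mul_apply, map_mul, Prod.fst_mul, ha r, hb r, Prod.mk_mul_mk]
  inv_mem' := by
    intro a ha r
    simp only [Set.mem_setOf_eq] at ha
    simp only [Prod.snd_inv, Pi.inv_apply, map_inv, Prod.fst_inv, ha r, Prod.inv_mk]

instance (n : ℕ) : TopologicalSpace (DihedralGroup n) := ⊥
instance (n : ℕ) : DiscreteTopology (DihedralGroup n) := ⟨rfl⟩
instance (p q : ℕ) : TopologicalSpace (Wgrp p q) := ⊥
instance (p q : ℕ) : DiscreteTopology (Wgrp p q) := ⟨rfl⟩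

variable (p q : ℕ) (V : Type*) (R : Set (V × V))

/-- The coordinate projection `π_v : G_Γ → D_p` at a vertex `v`. -/
def vProj (v : V) : ↥(GGamma p q V R) →* DihedralGroup p :=
  (Pi.evalMonoidHom (fun _ : V => DihedralGroup p) v).comp
    ((MonoidHom.fst _ _).comp (GGamma p q V R).subtype)

/-- The coordinate projection `π_r : G_Γ → W` at an edge `r`. -/
def eProj (r : R) : ↥(GGamma p q V R) →* Wgrp p q :=
  (Pi.evalMonoidHom (fun _ : R => Wgrp p q) r).comp
    ((MonoidHom.snd _ _).comp (GGamma p q V R).subtype)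

variable (I : Type*)

/-- The coordinate projection `π_v : G_Γ × C_2^I → D_p` at a vertex `v`. -/
def vProjK (v : V) : (↥(GGamma p q V R) × (I → ℤˣ)) →* DihedralGroup p :=
  (vProj p q V R v).comp (MonoidHom.fst _ _)

/-- The coordinate projection `π_r : G_Γ × C_2^I → W` at an edge `r`. -/
def eProjK (r : R) : (↥(GGamma p q V R) × (I → ℤˣ)) →* Wgrp p q :=
  (eProj p q V R r).comp (MonoidHom.fst _ _)

/-- The map `ξ_Γ : G_Γ → C_2^V`, `((a_v), (b_r)) ↦ (τ(a_v))_v`. -/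
def xiGamma : ↥(GGamma p q V R) →* (V → ℤˣ) :=
  Pi.monoidHom fun v => (dihedralSign p).comp (vProj p q V R v)

end

/-! The isomorphisms `φ_v`, `φ_r` give epimorphisms `f_v : G → D_p`, `f_r : G → W` with kernels
`N_v`, `M_r`, and the commuting squares say that they assemble into a continuous homomorphism
`Ψ : G → G_Γ`; the wanted `φ` is `Ψ⁻¹`, continuous since `G` is compact.

`Ψ` is bijective because the closed normal subgroups of `G_Γ` with quotient `D_p` (resp. `W`) are
exactly the kernels of the projections `π_v` (resp. `π_r`). For `D_p`, the factor `C_q^R` of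
`G_Γ = C_q^R ⋊ D_p^V` dies for order reasons, and a continuous epimorphism `D_p^V → D_p` factors
through one coordinate. For `W`, the two `D_p`-components single out vertices `v₁ ≠ v₂`, and the
`C_q` of an edge `r` survives only if `r` joins `v₁` and `v₂`: otherwise it commutes with an
element acting on `C_q` by inversion. So, transported along `e : G_Γ ≅ G`, the bijections
`v ↦ N_v` and `r ↦ M_r` become permutations `σ`, `ρ` with `ker (π_v ∘ Ψ ∘ e) = ker π_{σ v}` and
`ker (π_r ∘ Ψ ∘ e) = ker π_{ρ r}`, which forces `Ψ ∘ e` to be bijective. -/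

section Generic

theorem eq_one_of_pow_eq_one_of_coprime {G : Type*} [Group G] {n : ℕ}
    (hn : (Nat.card G).Coprime n) {x : G} (h : x ^ n = 1) : x = 1 :=
  hn.pow_left_bijective.injective (h.trans (one_pow n).symm)

theorem card_multiplicative_zmod (q : ℕ) : Nat.card (Multiplicative (ZMod q)) = q := by
  rw [Nat.card_congr Multiplicative.toAdd, Nat.card_zmod]

theorem MonoidHom.ker_eq_of_ker_le {A B : Type*} [Group A] [Group B] [Finite B] {π ψ : A →* B}
    (hπ : Surjective π) (hψ : Surjective ψ) (h : π.ker ≤ ψ.ker) : ψ.ker = π.ker := by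
  have hindex : ∀ f : A →* B, Surjective f → f.ker.index = Nat.card B := fun f hf => by
    rw [Subgroup.index_ker, MonoidHom.range_eq_top.mpr hf, Subgroup.card_top]
  have hrel := Subgroup.relIndex_mul_index h
  rw [hindex π hπ, hindex ψ hψ] at hrel
  refine le_antisymm (Subgroup.relIndex_eq_one.mp ?_) h
  exact Nat.eq_of_mul_eq_mul_right Nat.card_pos (hrel.trans (one_mul _).symm)

theorem MonoidHom.eq_iff_of_ker_eq {A B C : Type*} [Group A] [Group B] [Group C] {f : A →* B}
    {g : A →* C} (h : f.ker = g.ker) {x y : A} : f x = f y ↔ g x = g y := by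
  rw [f.eq_iff, g.eq_iff, h]

theorem MonoidHom.continuous_of_isClosed_ker {G M : Type*} [Group G] [TopologicalSpace G]
    [IsTopologicalGroup G] [Group M] [Finite M] [TopologicalSpace M] [DiscreteTopology M]
    (f : G →* M) (h : IsClosed (f.ker : Set G)) : Continuous f := by
  have hopen := Subgroup.isOpen_of_isClosed_of_finiteIndex f.ker h
  refine continuous_of_continuousAt_one f ?_
  rw [ContinuousAt, nhds_discrete M, map_one, Filter.tendsto_pure]
  exact hopen.mem_nhds f.ker.one_mem

theorem Subgroup.pi_le_of_isOpen {ι : Type*} [DecidableEq ι] {β : ι → Type*} [∀ i, Group (β i)]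
    [∀ i, TopologicalSpace (β i)] {H : Subgroup (∀ i, β i)} (hH : IsOpen (H : Set (∀ i, β i)))
    {s : Set ι} (hs : ∀ i ∉ s, ∀ x, Pi.mulSingle i x ∈ H) :
    Subgroup.pi s (fun _ => ⊥) ≤ H := by
  obtain ⟨I, u, hu, hIu⟩ := isOpen_pi_iff.mp hH 1 H.one_mem
  intro b hb
  have hsplit : b = (fun i => if i ∈ I then b i else 1) * (fun i => if i ∈ I then 1 else b i) := by
    funext i; by_cases hi : i ∈ I <;> simp [hi]
  rw [hsplit]
  refine H.mul_mem (Submonoid.pi_mem_of_mulSingle_mem_aux I _ (fun i hi => if_neg hi) ?_) ?_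
  · intro i hi
    by_cases his : i ∈ s
    · simp [hi, Subgroup.mem_bot.mp (hb i his), H.one_mem]
    · exact hs i his _
  · refine hIu fun i hi => ?_
    simpa [Finset.mem_coe.mp hi] using (hu i hi).2

theorem MonoidHom.map_mem_of_mulSingle_mem {ι : Type*} [DecidableEq ι] {β : ι → Type*}
    [∀ i, Group (β i)] [∀ i, TopologicalSpace (β i)] {M : Type*} [Group M] [TopologicalSpace M]
    [DiscreteTopology M] (f : (∀ i, β i) →* M) (hf : Continuous f) (Q : Subgroup M) {s : Set ι}
    (hs : ∀ i ∉ s, ∀ x, f (Pi.mulSingle i x) ∈ Q) {b : ∀ i, β i} (hb : ∀ i ∈ s, b i = 1) :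
    f b ∈ Q :=
  Subgroup.pi_le_of_isOpen (H := Q.comap f) ((isOpen_discrete _).preimage hf) hs
    fun i hi => Subgroup.mem_bot.mpr (hb i hi)

theorem exists_equiv_of_range_eq {ι κ α : Type*} {f : ι → α} {g : κ → α} (hf : Injective f)
    (hg : Injective g) (h : Set.range f = Set.range g) : ∃ σ : ι ≃ κ, ∀ i, f i = g (σ i) :=
  ⟨(Equiv.ofInjective f hf).trans ((Equiv.setCongr h).trans (Equiv.ofInjective g hg).symm),
    fun i => by simp [Equiv.apply_ofInjective_symm]⟩

end Generic

def closedKernels (G Q : Type*) [Group G] [TopologicalSpace G] [Group Q] : Set (Subgroup G) :=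
  {N | IsClosed (N : Set G) ∧ ∃ ψ : G →* Q, Surjective ψ ∧ ψ.ker = N}

section ClosedKernels

variable {H G Q : Type*} [Group H] [TopologicalSpace H] [Group G] [TopologicalSpace G] [Group Q]

theorem comap_mem_closedKernels (e : H ≃* G) (he : Continuous e) {N : Subgroup G}
    (hN : N ∈ closedKernels G Q) : N.comap e.toMonoidHom ∈ closedKernels H Q :=
  let ⟨ψ, hψ, hker⟩ := hN.2
  ⟨hN.1.preimage he, ψ.comp e.toMonoidHom, hψ.comp e.surjective,
    by rw [← hker, MonoidHom.comap_ker]⟩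

theorem range_comap_eq_closedKernels {ι : Type*} (e : H ≃* G) (he : Continuous e)
    (he' : Continuous e.symm) {N : ι → Subgroup G} (hN : Set.range N = closedKernels G Q) :
    Set.range (fun i => (N i).comap e.toMonoidHom) = closedKernels H Q := by
  ext K
  constructor
  · rintro ⟨i, rfl⟩
    exact comap_mem_closedKernels e he (hN ▸ ⟨i, rfl⟩)
  · intro hK
    obtain ⟨i, hi⟩ := hN ▸ comap_mem_closedKernels e.symm he' hK
    refine ⟨i, ?_⟩
    ext x
    simp [hi]

end ClosedKernels

section QuotientEquiv

variable {A B B' G : Type*} [Group A] [Group B] [Group B'] [Group G]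

def homOfQuotientEquiv (π : A →* B) (N : Subgroup G) [N.Normal] (φ : A ⧸ π.ker ≃* G ⧸ N) :
    G →* B :=
  (QuotientGroup.kerLift π).comp (φ.symm.toMonoidHom.comp (QuotientGroup.mk' N))

variable (π : A →* B) {N : Subgroup G} [N.Normal] (φ : A ⧸ π.ker ≃* G ⧸ N)

theorem homOfQuotientEquiv_eq_iff {g : G} {x : A} :
    homOfQuotientEquiv π N φ g = π x ↔ φ x = g := by
  change QuotientGroup.kerLift π (φ.symm g) = QuotientGroup.kerLift π x ↔ _
  rw [(QuotientGroup.kerLift_injective π).eq_iff, MulEquiv.symm_apply_eq, eq_comm]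

theorem ker_homOfQuotientEquiv : (homOfQuotientEquiv π N φ).ker = N := by
  ext g
  rw [MonoidHom.mem_ker, ← map_one π, homOfQuotientEquiv_eq_iff, QuotientGroup.mk_one, map_one,
    eq_comm, QuotientGroup.eq_one_iff]

theorem homOfQuotientEquiv_surjective (hπ : Surjective π) :
    Surjective (homOfQuotientEquiv π N φ) := fun b =>
  let ⟨x, hx⟩ := hπ b
  let ⟨g, hg⟩ := QuotientGroup.mk_surjective (φ x)
  ⟨g, hx ▸ (homOfQuotientEquiv_eq_iff π φ).mpr hg.symm⟩

theorem map_homOfQuotientEquiv {π' : A →* B'} {κ : B →* B'} (hκ : ∀ x, κ (π x) = π' x)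
    {N' : Subgroup G} [N'.Normal] (hN : N ≤ N'.comap (MonoidHom.id G))
    {φ' : A ⧸ π'.ker ≃* G ⧸ N'}
    (hsq : ∀ x : A, QuotientGroup.map N N' (MonoidHom.id G) hN (φ x) = φ' x) (g : G) :
    κ (homOfQuotientEquiv π N φ g) = homOfQuotientEquiv π' N' φ' g := by
  obtain ⟨x, hx⟩ := QuotientGroup.mk_surjective (φ.symm g)
  have hφx : φ x = g := by rw [hx, MulEquiv.apply_symm_apply]
  rw [(homOfQuotientEquiv_eq_iff π φ).mpr hφx, hκ, eq_comm, homOfQuotientEquiv_eq_iff, ← hsq, hφx]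
  rfl

end QuotientEquiv

theorem ZMod.eq_zero_of_add_self_eq_zero {p : ℕ} (hp : Odd p) {a : ZMod p} (h : a + a = 0) :
    a = 0 := by
  have h2 : IsUnit (2 : ZMod p) := by
    simpa using (ZMod.unitOfCoprime 2 (Nat.coprime_two_left.mpr hp)).isUnit
  rw [← two_mul] at h
  exact h2.mul_right_eq_zero.mp h

namespace DihedralGroup

variable {p : ℕ}

theorem commute_sr_iff (hp : Odd p) {x : DihedralGroup p} {i : ZMod p} :
    Commute x (sr i) ↔ x = 1 ∨ x = sr i := by
  rw [Commute, SemiconjBy, one_def]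
  cases x with
  | r m =>
    simp only [r_mul_sr, sr_mul_r, sr.injEq, r.injEq, reduceCtorEq, or_false]
    constructor
    · intro h; exact ZMod.eq_zero_of_add_self_eq_zero hp (by linear_combination -h)
    · rintro rfl; ring
  | sr m =>
    simp only [sr_mul_sr, r.injEq, reduceCtorEq, sr.injEq, false_or]
    constructor
    · intro h
      exact (sub_eq_zero.mp (ZMod.eq_zero_of_add_self_eq_zero hp (by linear_combination h))).symm
    · rintro rfl; rfl

theorem eq_one_of_commute_sr_of_commute (hp : Odd p) {c z : DihedralGroup p} {i : ZMod p}
    (hc : Commute c (sr i)) (hcz : Commute c z) (hz : ¬ Commute z (sr i)) : c = 1 :=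
  ((commute_sr_iff hp).mp hc).resolve_right fun h => hz (h ▸ hcz.symm)

theorem not_commute_r_one_sr (hp : Odd p) (hp1 : p ≠ 1) (i : ZMod p) :
    ¬ Commute (r 1 : DihedralGroup p) (sr i) := by
  rw [commute_sr_iff hp, one_def]
  rintro (h | h)
  · exact hp1 (ZMod.one_eq_zero_iff.mp (r.inj h))
  · cases h

/-- Some factor contributes a reflection `sr i₀` together with an element not commuting with it;
the other factors commute with both, hence are trivial. -/
theorem exists_mulSingle_eq_one_of_surjective {V : Type*} [DecidableEq V] (hp : Odd p)
    (hp1 : p ≠ 1) (f : (V → DihedralGroup p) →* DihedralGroup p) (hf : Continuous f)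
    (hsurj : Surjective f) : ∃ v₀, ∀ v ≠ v₀, ∀ d, f (Pi.mulSingle v d) = 1 := by
  obtain ⟨v₀, d₀, i₀, h₀⟩ : ∃ v₀ d₀ i₀, f (Pi.mulSingle v₀ d₀) = sr i₀ := by
    by_contra! h
    obtain ⟨b, hb⟩ := hsurj (sr 0)
    have hsign := f.map_mem_of_mulSingle_mem hf (dihedralSign p).ker (s := ∅)
      (fun v _ d => ?_) (b := b) (by simp)
    · rw [hb] at hsign
      exact (by decide : (-1 : ℤˣ) ≠ 1) hsign
    · cases hvd : f (Pi.mulSingle v d) with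
      | r j => rfl
      | sr j => exact absurd hvd (h v d j)
  obtain ⟨d₁, hd₁⟩ : ∃ d₁, ¬ Commute (f (Pi.mulSingle v₀ d₁)) (sr i₀) := by
    by_contra! h
    obtain ⟨b, hb⟩ := hsurj (r 1)
    apply not_commute_r_one_sr hp hp1 i₀
    have hcent := f.map_mem_of_mulSingle_mem hf (Subgroup.centralizer {sr i₀}) (s := ∅)
      (fun v _ d => ?_) (b := b) (by simp)
    · rw [hb, Subgroup.mem_centralizer_singleton_iff] at hcent
      exact hcent
    · rw [Subgroup.mem_centralizer_singleton_iff]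
      rcases eq_or_ne v v₀ with rfl | hv
      · exact h d
      · rw [← h₀]; exact (Pi.mulSingle_commute hv d d₀).map f
  refine ⟨v₀, fun v hv d => eq_one_of_commute_sr_of_commute hp ?_ ?_ hd₁⟩
  · rw [← h₀]; exact (Pi.mulSingle_commute hv d d₀).map f
  · exact (Pi.mulSingle_commute hv d d₁).map f

end DihedralGroup

section Wgrp

variable {p q : ℕ}

instance [NeZero p] [NeZero q] : Finite (Wgrp p q) :=
  Finite.of_equiv _ SemidirectProduct.equivProd.symm

variable (p q) in
def lamFst : Wgrp p q →* DihedralGroup p := (MonoidHom.fst _ _).comp (lamW p q)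

variable (p q) in
def lamSnd : Wgrp p q →* DihedralGroup p := (MonoidHom.snd _ _).comp (lamW p q)

theorem Wgrp.inl_left_eq_self {w : Wgrp p q} (hw : lamW p q w = 1) :
    SemidirectProduct.inl w.left = w := by
  conv_rhs => rw [← SemidirectProduct.inl_left_mul_inr_right w]
  rw [show w.right = 1 from hw, map_one, mul_one]

theorem Wgrp.eq_one_of_lamW_eq_one {n : ℕ} (hn : q.Coprime n) {w : Wgrp p q}
    (hw : lamW p q w = 1) (h : w ^ n = 1) : w = 1 := by
  rw [← Wgrp.inl_left_eq_self hw, ← map_pow] at h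
  have hleft : w.left ^ n = 1 := SemidirectProduct.inl_injective (h.trans (map_one _).symm)
  rw [← Wgrp.inl_left_eq_self hw,
    eq_one_of_pow_eq_one_of_coprime (by rwa [card_multiplicative_zmod]) hleft, map_one]

/-- `hw` says that `w` acts on `C_q` by inversion, so `z = z⁻¹`. -/
theorem Wgrp.eq_one_of_commute_inl (hq : Odd q) {z : Multiplicative (ZMod q)} {w : Wgrp p q}
    (h : Commute (SemidirectProduct.inl z) w)
    (hw : dihedralSign p w.right.1 * dihedralSign p w.right.2 = -1) : z = 1 := by
  have hleft := congrArg SemidirectProduct.left h.eq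
  have hinv : Wact p q w.right z = z⁻¹ := by
    change z ^ ((dihedralSign p w.right.1 * dihedralSign p w.right.2 : ℤˣ) : ℤ) = z⁻¹
    rw [hw, Units.val_neg, Units.val_one, zpow_neg_one]
  simp only [SemidirectProduct.mul_left, SemidirectProduct.left_inl, SemidirectProduct.right_inl,
    map_one, MulAut.one_apply, hinv, mul_comm z] at hleft
  have hz : z = z⁻¹ := mul_left_cancel hleft
  refine eq_one_of_pow_eq_one_of_coprime (n := 2)
    (by rwa [card_multiplicative_zmod, Nat.coprime_two_right]) ?_
  calc z ^ 2 = z * z⁻¹ := by rw [pow_two, ← hz]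
    _ = 1 := mul_inv_cancel z

end Wgrp

section Graph

variable {V : Type*} {R : Set (V × V)}

theorem fst_ne_snd_of_mem (hloop : ∀ v : V, (v, v) ∉ R) (r : R) : r.1.1 ≠ r.1.2 := by
  obtain ⟨⟨a, b⟩, hab⟩ := r
  rintro (rfl : a = b)
  exact hloop a hab

theorem eq_of_sym2_eq (hor : ∀ a b : V, (a, b) ∈ R → (b, a) ∉ R) {r s : R}
    (h : s(r.1.1, r.1.2) = s(s.1.1, s.1.2)) : r = s := by
  rcases Sym2.mk_eq_mk_iff.mp h with h | h
  · exact Subtype.ext h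
  · exact (hor _ _ s.2 (h ▸ r.2 : s.1.swap ∈ R)).elim

end Graph

section GGammaStructure

variable {p q : ℕ} {V : Type*} {R : Set (V × V)}

namespace GGamma

variable (p q V R) in
/-- `G_Γ` is the semidirect product `C_q^R ⋊ D_p^V`; `inl` and `inr` are its two factors. -/
def inr : (V → DihedralGroup p) →* ↥(GGamma p q V R) :=
  ((MonoidHom.id _).prod (MonoidHom.pi fun r : R => SemidirectProduct.inr.comp
      ((Pi.evalMonoidHom _ r.1.1).prod (Pi.evalMonoidHom _ r.1.2)))).codRestrict _
    fun _ _ => SemidirectProduct.rightHom_inr _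

variable (p q V R) in
def inl : (R → Multiplicative (ZMod q)) →* ↥(GGamma p q V R) :=
  ((1 : _ →* (V → DihedralGroup p)).prod (MonoidHom.pi fun r : R =>
      SemidirectProduct.inl.comp (Pi.evalMonoidHom _ r))).codRestrict _
    fun _ _ => SemidirectProduct.rightHom_inl _

@[simp] theorem vProj_inr (v : V) (a : V → DihedralGroup p) :
    vProj p q V R v (inr p q V R a) = a v := rfl

@[simp] theorem eProj_inr (r : R) (a : V → DihedralGroup p) :
    eProj p q V R r (inr p q V R a) = SemidirectProduct.inr (a r.1.1, a r.1.2) := rfl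

@[simp] theorem vProj_inl (v : V) (c : R → Multiplicative (ZMod q)) :
    vProj p q V R v (inl p q V R c) = 1 := rfl

@[simp] theorem eProj_inl (r : R) (c : R → Multiplicative (ZMod q)) :
    eProj p q V R r (inl p q V R c) = SemidirectProduct.inl (c r) := rfl

theorem lamW_eProj (x : ↥(GGamma p q V R)) (r : R) :
    lamW p q (eProj p q V R r x) = (vProj p q V R r.1.1 x, vProj p q V R r.1.2 x) :=
  x.2 r

@[ext] theorem ext {x y : ↥(GGamma p q V R)} (hv : ∀ v, vProj p q V R v x = vProj p q V R v y)
    (hr : ∀ r, eProj p q V R r x = eProj p q V R r y) : x = y :=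
  Subtype.ext (Prod.ext (funext hv) (funext hr))

theorem inl_mul_inr (x : ↥(GGamma p q V R)) :
    inl p q V R (fun r => (eProj p q V R r x).left) * inr p q V R (vProj p q V R · x) = x := by
  refine ext (fun v => by simp) fun r => ?_
  rw [map_mul, eProj_inl, eProj_inr, ← lamW_eProj]
  exact SemidirectProduct.inl_left_mul_inr_right _

theorem continuous_inr : Continuous (inr p q V R) :=
  continuous_induced_rng.2 <| continuous_id.prodMk <| continuous_pi fun _ =>
    continuous_of_discreteTopology.comp ((continuous_apply _).prodMk (continuous_apply _))

theorem continuous_inl : Continuous (inl p q V R) :=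
  continuous_induced_rng.2 <| continuous_const.prodMk <| continuous_pi fun r =>
    (continuous_of_discreteTopology (f := fun z : Multiplicative (ZMod q) =>
      (SemidirectProduct.inl z : Wgrp p q))).comp (continuous_apply r)

theorem commute_inl_inr [DecidableEq V] [DecidableEq R] {r : R} {w : V} (hw : w ∉ s(r.1.1, r.1.2))
    (c : Multiplicative (ZMod q)) (d : DihedralGroup p) :
    Commute (inl p q V R (Pi.mulSingle r c)) (inr p q V R (Pi.mulSingle w d)) := by
  rw [Sym2.mem_iff, not_or] at hw
  refine ext (fun v => by simp) fun s => ?_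
  rcases eq_or_ne s r with rfl | hs
  · simp [Pi.mulSingle_eq_of_ne' hw.1, Pi.mulSingle_eq_of_ne' hw.2, ← Prod.one_eq_mk]
  · simp [Pi.mulSingle_eq_of_ne hs]

variable {G : Type*} [Group G]

def lift (f : V → G →* DihedralGroup p) (g : R → G →* Wgrp p q)
    (h : ∀ r x, lamW p q (g r x) = (f r.1.1 x, f r.1.2 x)) : G →* ↥(GGamma p q V R) :=
  ((MonoidHom.pi f).prod (MonoidHom.pi g)).codRestrict _ fun x r => h r x

theorem continuous_lift [TopologicalSpace G] {f : V → G →* DihedralGroup p}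
    {g : R → G →* Wgrp p q} (h) (hf : ∀ v, Continuous (f v)) (hg : ∀ r, Continuous (g r)) :
    Continuous (lift f g h) :=
  ((continuous_pi hf).prodMk (continuous_pi hg)).subtype_mk _

end GGamma

open GGamma

theorem continuous_vProj (v : V) : Continuous (vProj p q V R v) :=
  (continuous_apply v).comp (continuous_fst.comp continuous_subtype_val)

theorem continuous_eProj (r : R) : Continuous (eProj p q V R r) :=
  (continuous_apply r).comp (continuous_snd.comp continuous_subtype_val)

theorem vProj_surjective (v : V) : Surjective (vProj p q V R v) := by
  classical
  exact fun d => ⟨inr p q V R (Pi.mulSingle v d), by simp⟩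

theorem eProj_surjective {r : R} (hr : r.1.1 ≠ r.1.2) : Surjective (eProj p q V R r) := by
  classical
  intro w
  refine ⟨inl p q V R (Pi.mulSingle r w.left) *
    inr p q V R (Pi.mulSingle r.1.1 w.right.1 * Pi.mulSingle r.1.2 w.right.2), ?_⟩
  rw [map_mul, eProj_inl, eProj_inr, Pi.mulSingle_eq_same]
  simp only [Pi.mul_apply, Pi.mulSingle_eq_same, Pi.mulSingle_eq_of_ne hr,
    Pi.mulSingle_eq_of_ne' hr, mul_one, one_mul]
  exact SemidirectProduct.inl_left_mul_inr_right w

theorem vProj_eq_of_eProj_eq {x y : ↥(GGamma p q V R)} {r : R}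
    (h : eProj p q V R r x = eProj p q V R r y) {u : V} (hu : u ∈ s(r.1.1, r.1.2)) :
    vProj p q V R u x = vProj p q V R u y := by
  have hlam := congrArg (lamW p q) h
  rw [lamW_eProj, lamW_eProj, Prod.mk.injEq] at hlam
  rcases Sym2.mem_iff.mp hu with rfl | rfl
  exacts [hlam.1, hlam.2]

theorem vProj_ker_injective : Injective fun v => (vProj p q V R v).ker := by
  classical
  intro v w h
  by_contra hvw
  have hmem : inr p q V R (Pi.mulSingle v (DihedralGroup.sr 0)) ∈ (vProj p q V R w).ker := by
    simp [Pi.mulSingle_eq_of_ne' hvw]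
  simp only [← h, MonoidHom.mem_ker, vProj_inr, Pi.mulSingle_eq_same] at hmem
  cases hmem

theorem eProj_ker_injective [Fact (1 < q)] : Injective fun r => (eProj p q V R r).ker := by
  classical
  intro r s h
  by_contra hrs
  have hmem : inl p q V R (Pi.mulSingle r (Multiplicative.ofAdd 1)) ∈ (eProj p q V R s).ker := by
    simp [Pi.mulSingle_eq_of_ne' hrs]
  simp only [← h, MonoidHom.mem_ker, eProj_inl, Pi.mulSingle_eq_same] at hmem
  exact one_ne_zero (congrArg Multiplicative.toAdd (SemidirectProduct.inl_injective
    (hmem.trans (map_one _).symm)))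

theorem map_eq_one_of_mulSingle [DecidableEq V] [DecidableEq R] {M : Type*} [Group M]
    [TopologicalSpace M] [DiscreteTopology M] {ψ : ↥(GGamma p q V R) →* M} (hψ : Continuous ψ)
    {S : Set V} {T : Set R} (hinr : ∀ w ∉ S, ∀ d, ψ (inr p q V R (Pi.mulSingle w d)) = 1)
    (hinl : ∀ r ∉ T, ∀ c, ψ (inl p q V R (Pi.mulSingle r c)) = 1) {x : ↥(GGamma p q V R)}
    (hxS : ∀ v ∈ S, vProj p q V R v x = 1) (hxT : ∀ r ∈ T, eProj p q V R r x = 1) : ψ x = 1 := by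
  have hl := (ψ.comp (inl p q V R)).map_mem_of_mulSingle_mem (hψ.comp continuous_inl) ⊥
    (fun r hr c => Subgroup.mem_bot.mpr (hinl r hr c)) (b := fun r => (eProj p q V R r x).left)
    fun r hr => by rw [hxT r hr]; rfl
  have hr := (ψ.comp (inr p q V R)).map_mem_of_mulSingle_mem (hψ.comp continuous_inr) ⊥
    (fun w hw d => Subgroup.mem_bot.mpr (hinr w hw d)) (b := (vProj p q V R · x)) hxS
  rw [Subgroup.mem_bot, MonoidHom.comp_apply] at hl hr
  rw [← inl_mul_inr x, map_mul, hl, hr, mul_one]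

end GGammaStructure

section Classification

variable {p q : ℕ} {V : Type*} {R : Set (V × V)}

open GGamma

theorem exists_ker_eq_vProj_ker (hp : Odd p) (hp1 : p ≠ 1)
    (hcop : (2 * p).Coprime q) (ψ : ↥(GGamma p q V R) →* DihedralGroup p) (hψ : Continuous ψ)
    (hsurj : Surjective ψ) : ∃ v, ψ.ker = (vProj p q V R v).ker := by
  classical
  have : NeZero p := ⟨hp.pos.ne'⟩
  have hinl : ∀ c, ψ (inl p q V R c) = 1 := fun c => by
    refine eq_one_of_pow_eq_one_of_coprime (by rwa [DihedralGroup.nat_card]) ?_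
    have hc : c ^ q = 1 := funext fun r => by
      simpa [card_multiplicative_zmod] using pow_card_eq_one' (x := c r)
    rw [← map_pow, ← map_pow, hc, map_one, map_one]
  have hfac : ∀ x, ψ x = ψ (inr p q V R (vProj p q V R · x)) := fun x => by
    conv_lhs => rw [← inl_mul_inr x]
    rw [map_mul, hinl, one_mul]
  obtain ⟨v₀, hv₀⟩ := DihedralGroup.exists_mulSingle_eq_one_of_surjective hp hp1
    (ψ.comp (inr p q V R)) (hψ.comp continuous_inr)
    fun d => let ⟨x, hx⟩ := hsurj d; ⟨_, (hfac x).symm.trans hx⟩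
  exact ⟨v₀, MonoidHom.ker_eq_of_ker_le (vProj_surjective v₀) hsurj fun x hx =>
    map_eq_one_of_mulSingle hψ (S := {v₀}) (T := ∅) hv₀ (fun _ _ c => hinl _)
      (fun v hv => (Set.mem_singleton_iff.mp hv) ▸ hx) (by simp)⟩

theorem exists_map_inr_mulSingle [DecidableEq V] {θ θ' : ↥(GGamma p q V R) →* DihedralGroup p}
    (hθ : Surjective θ) {u u' : V} (hu : u ≠ u') (h : θ.ker = (vProj p q V R u).ker)
    (h' : θ'.ker = (vProj p q V R u').ker) (y : DihedralGroup p) :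
    ∃ d, θ (inr p q V R (Pi.mulSingle u d)) = y ∧ θ' (inr p q V R (Pi.mulSingle u d)) = 1 := by
  obtain ⟨x, rfl⟩ := hθ y
  refine ⟨vProj p q V R u x, (MonoidHom.eq_iff_of_ker_eq h).mpr (by simp), ?_⟩
  change _ ∈ θ'.ker
  simp [h', Pi.mulSingle_eq_of_ne' hu]

section EdgeQuotients

variable {ψ : ↥(GGamma p q V R) →* Wgrp p q} {v₁ v₂ : V}

theorem lamW_eq_one_of_vProj_eq_one (h₁ : ((lamFst p q).comp ψ).ker = (vProj p q V R v₁).ker)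
    (h₂ : ((lamSnd p q).comp ψ).ker = (vProj p q V R v₂).ker) {x : ↥(GGamma p q V R)}
    (hx₁ : vProj p q V R v₁ x = 1) (hx₂ : vProj p q V R v₂ x = 1) : lamW p q (ψ x) = 1 :=
  Prod.ext (show x ∈ ((lamFst p q).comp ψ).ker from h₁ ▸ hx₁)
    (show x ∈ ((lamSnd p q).comp ψ).ker from h₂ ▸ hx₂)

theorem map_inr_mulSingle_eq_one [DecidableEq V] (hcop : (2 * p).Coprime q)
    (h₁ : ((lamFst p q).comp ψ).ker = (vProj p q V R v₁).ker)
    (h₂ : ((lamSnd p q).comp ψ).ker = (vProj p q V R v₂).ker) {w : V} (hw : w ∉ s(v₁, v₂))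
    (d : DihedralGroup p) : ψ (inr p q V R (Pi.mulSingle w d)) = 1 := by
  rw [Sym2.mem_iff, not_or] at hw
  refine Wgrp.eq_one_of_lamW_eq_one hcop.symm (lamW_eq_one_of_vProj_eq_one h₁ h₂
    (by simp [Pi.mulSingle_eq_of_ne' hw.1]) (by simp [Pi.mulSingle_eq_of_ne' hw.2])) ?_
  rw [← map_pow, ← map_pow, ← Pi.mulSingle_pow, ← DihedralGroup.nat_card, pow_card_eq_one',
    Pi.mulSingle_one, map_one, map_one]

theorem exists_sign_map_inr_mulSingle [DecidableEq V] (hsurj : Surjective ψ) (hv : v₁ ≠ v₂)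
    (h₁ : ((lamFst p q).comp ψ).ker = (vProj p q V R v₁).ker)
    (h₂ : ((lamSnd p q).comp ψ).ker = (vProj p q V R v₂).ker) {u : V} (hu : u ∈ s(v₁, v₂)) :
    ∃ d, dihedralSign p (ψ (inr p q V R (Pi.mulSingle u d))).right.1 *
      dihedralSign p (ψ (inr p q V R (Pi.mulSingle u d))).right.2 = -1 := by
  have hsurj₁ : Surjective ((lamFst p q).comp ψ) :=
    (Prod.fst_surjective.comp SemidirectProduct.rightHom_surjective).comp hsurj
  have hsurj₂ : Surjective ((lamSnd p q).comp ψ) :=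
    (Prod.snd_surjective.comp SemidirectProduct.rightHom_surjective).comp hsurj
  rcases Sym2.mem_iff.mp hu with rfl | rfl
  · obtain ⟨d, hd₁, hd₂⟩ := exists_map_inr_mulSingle hsurj₁ hv h₁ h₂ (DihedralGroup.sr 0)
    change (ψ _).right.1 = _ at hd₁
    change (ψ _).right.2 = _ at hd₂
    exact ⟨d, by rw [hd₁, hd₂]; rfl⟩
  · obtain ⟨d, hd₂, hd₁⟩ := exists_map_inr_mulSingle hsurj₂ hv.symm h₂ h₁ (DihedralGroup.sr 0)
    change (ψ _).right.1 = _ at hd₁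
    change (ψ _).right.2 = _ at hd₂
    exact ⟨d, by rw [hd₁, hd₂]; rfl⟩

theorem sym2_eq_of_map_inl_ne_one [DecidableEq V] [DecidableEq R] (hq : Odd q)
    (hsurj : Surjective ψ) (hv : v₁ ≠ v₂) (h₁ : ((lamFst p q).comp ψ).ker = (vProj p q V R v₁).ker)
    (h₂ : ((lamSnd p q).comp ψ).ker = (vProj p q V R v₂).ker) {r : R}
    {c : Multiplicative (ZMod q)} (hc : ψ (inl p q V R (Pi.mulSingle r c)) ≠ 1) :
    s(r.1.1, r.1.2) = s(v₁, v₂) := by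
  have hleft := Wgrp.inl_left_eq_self (lamW_eq_one_of_vProj_eq_one h₁ h₂ (x :=
    inl p q V R (Pi.mulSingle r c)) rfl rfl)
  have hends : ∀ u ∈ s(v₁, v₂), u ∈ s(r.1.1, r.1.2) := by
    intro u hu
    by_contra hur
    obtain ⟨d, hd⟩ := exists_sign_map_inr_mulSingle hsurj hv h₁ h₂ hu
    have hcomm := (commute_inl_inr hur c d).map ψ
    rw [← hleft] at hcomm hc
    exact hc (by rw [Wgrp.eq_one_of_commute_inl hq hcomm hd, map_one])
  exact (Sym2.mem_and_mem_iff hv).mp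
    ⟨hends _ (Sym2.mem_mk_left _ _), hends _ (Sym2.mem_mk_right _ _)⟩

theorem exists_map_inl_mulSingle_ne_one [DecidableEq V] [DecidableEq R] [Fact (1 < q)]
    (hψ : Continuous ψ) (hsurj : Surjective ψ)
    (h₁ : ((lamFst p q).comp ψ).ker = (vProj p q V R v₁).ker)
    (h₂ : ((lamSnd p q).comp ψ).ker = (vProj p q V R v₂).ker)
    (hinr : ∀ w ∉ s(v₁, v₂), ∀ d, ψ (inr p q V R (Pi.mulSingle w d)) = 1) :
    ∃ r c, ψ (inl p q V R (Pi.mulSingle r c)) ≠ 1 := by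
  by_contra! h
  obtain ⟨x, hx⟩ := hsurj (SemidirectProduct.inl (Multiplicative.ofAdd 1))
  have hx₁ : x ∈ (vProj p q V R v₁).ker := by
    rw [← h₁, MonoidHom.mem_ker, MonoidHom.comp_apply, hx]
    rfl
  have hx₂ : x ∈ (vProj p q V R v₂).ker := by
    rw [← h₂, MonoidHom.mem_ker, MonoidHom.comp_apply, hx]
    rfl
  have hone : ψ x = 1 := map_eq_one_of_mulSingle hψ (S := {u | u ∈ s(v₁, v₂)}) (T := ∅) hinr
    (fun r _ c => h r c) (fun u hu => by rcases Sym2.mem_iff.mp hu with rfl | rfl <;> assumption)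
    (by simp)
  rw [hone, eq_comm, ← map_one SemidirectProduct.inl] at hx
  exact one_ne_zero (congrArg Multiplicative.toAdd (SemidirectProduct.inl_injective hx))

end EdgeQuotients

theorem exists_ker_eq_eProj_ker [Fact (1 < q)] (hp : Odd p) (hp1 : p ≠ 1)
    (hcop : (2 * p).Coprime q) (hloop : ∀ v : V, (v, v) ∉ R)
    (hor : ∀ a b : V, (a, b) ∈ R → (b, a) ∉ R) (ψ : ↥(GGamma p q V R) →* Wgrp p q)
    (hψ : Continuous ψ) (hsurj : Surjective ψ) : ∃ r, ψ.ker = (eProj p q V R r).ker := by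
  classical
  have : NeZero p := ⟨hp.pos.ne'⟩
  have : NeZero q := ⟨(Fact.out : 1 < q).ne_bot⟩
  have hq : Odd q := Nat.coprime_two_left.mp (Nat.Coprime.coprime_mul_right hcop)
  obtain ⟨v₁, h₁⟩ := exists_ker_eq_vProj_ker hp hp1 hcop ((lamFst p q).comp ψ)
    ((continuous_of_discreteTopology (f := lamFst p q)).comp hψ)
    ((Prod.fst_surjective.comp SemidirectProduct.rightHom_surjective).comp hsurj)
  obtain ⟨v₂, h₂⟩ := exists_ker_eq_vProj_ker hp hp1 hcop ((lamSnd p q).comp ψ)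
    ((continuous_of_discreteTopology (f := lamSnd p q)).comp hψ)
    ((Prod.snd_surjective.comp SemidirectProduct.rightHom_surjective).comp hsurj)
  have hv : v₁ ≠ v₂ := by
    rintro rfl
    obtain ⟨x, hx⟩ := hsurj (SemidirectProduct.inr (DihedralGroup.sr 0, 1))
    have hx₁ : x ∈ ((lamFst p q).comp ψ).ker := by
      rw [h₁, ← h₂, MonoidHom.mem_ker, MonoidHom.comp_apply, hx]
      rfl
    rw [MonoidHom.mem_ker, MonoidHom.comp_apply, hx] at hx₁
    cases hx₁
  have hinr := fun w hw d => map_inr_mulSingle_eq_one (ψ := ψ) hcop h₁ h₂ (w := w) hw d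
  obtain ⟨r₀, c₀, hc₀⟩ := exists_map_inl_mulSingle_ne_one hψ hsurj h₁ h₂ hinr
  have hr₀ := sym2_eq_of_map_inl_ne_one hq hsurj hv h₁ h₂ hc₀
  have hinl : ∀ r ≠ r₀, ∀ c, ψ (inl p q V R (Pi.mulSingle r c)) = 1 := fun r hr c =>
    by_contra fun hc =>
      hr (eq_of_sym2_eq hor ((sym2_eq_of_map_inl_ne_one hq hsurj hv h₁ h₂ hc).trans hr₀.symm))
  refine ⟨r₀, MonoidHom.ker_eq_of_ker_le (eProj_surjective (fst_ne_snd_of_mem hloop r₀)) hsurj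
    fun x hx => map_eq_one_of_mulSingle hψ (S := {u | u ∈ s(v₁, v₂)}) (T := {r₀}) hinr hinl
      (fun u hu => ?_) fun r hr => (Set.mem_singleton_iff.mp hr) ▸ hx⟩
  change u ∈ s(v₁, v₂) at hu
  rw [← hr₀] at hu
  exact (vProj_eq_of_eProj_eq (hx.trans (map_one _).symm) hu).trans (map_one _)

end Classification

section Kernels

variable {p q : ℕ} {V : Type*} {R : Set (V × V)}

theorem range_vProj_ker (hp : Odd p) (hp1 : p ≠ 1) (hcop : (2 * p).Coprime q) :
    Set.range (fun v => (vProj p q V R v).ker) =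
      closedKernels (↥(GGamma p q V R)) (DihedralGroup p) := by
  have : NeZero p := ⟨hp.pos.ne'⟩
  ext N
  constructor
  · rintro ⟨v, rfl⟩
    exact ⟨(isClosed_discrete {1}).preimage (continuous_vProj v), _, vProj_surjective v, rfl⟩
  · rintro ⟨hN, ψ, hψ, rfl⟩
    obtain ⟨v, hv⟩ := exists_ker_eq_vProj_ker hp hp1 hcop ψ (ψ.continuous_of_isClosed_ker hN) hψ
    exact ⟨v, hv.symm⟩

theorem range_eProj_ker [Fact (1 < q)] (hp : Odd p) (hp1 : p ≠ 1)
    (hcop : (2 * p).Coprime q) (hloop : ∀ v : V, (v, v) ∉ R)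
    (hor : ∀ a b : V, (a, b) ∈ R → (b, a) ∉ R) :
    Set.range (fun r => (eProj p q V R r).ker) = closedKernels (↥(GGamma p q V R)) (Wgrp p q) := by
  have : NeZero p := ⟨hp.pos.ne'⟩
  have : NeZero q := ⟨(Fact.out : 1 < q).ne_bot⟩
  ext N
  constructor
  · rintro ⟨r, rfl⟩
    exact ⟨(isClosed_discrete {1}).preimage (continuous_eProj r), _,
      eProj_surjective (fst_ne_snd_of_mem hloop r), rfl⟩
  · rintro ⟨hN, ψ, hψ, rfl⟩
    obtain ⟨r, hr⟩ :=
      exists_ker_eq_eProj_ker hp hp1 hcop hloop hor ψ (ψ.continuous_of_isClosed_ker hN) hψ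
    exact ⟨r, hr.symm⟩

end Kernels

section Endomorphisms

variable {p q : ℕ} {V : Type*} {R : Set (V × V)}
  (Θ : ↥(GGamma p q V R) →* ↥(GGamma p q V R)) {σ : V ≃ V} {ρ : R ≃ R}

open GGamma

theorem sym2_eProj_eq_map (hloop : ∀ v : V, (v, v) ∉ R)
    (hσ : ∀ v, ((vProj p q V R v).comp Θ).ker = (vProj p q V R (σ v)).ker)
    (hρ : ∀ r, ((eProj p q V R r).comp Θ).ker = (eProj p q V R (ρ r)).ker) (r : R) :
    s((ρ r).1.1, (ρ r).1.2) = s(σ r.1.1, σ r.1.2) := by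
  classical
  have hends : ∀ u ∈ s(r.1.1, r.1.2), σ u ∈ s((ρ r).1.1, (ρ r).1.2) := by
    intro u hu
    by_contra h
    rw [Sym2.mem_iff, not_or] at h
    set z := inr p q V R (Pi.mulSingle (σ u) (DihedralGroup.sr 0))
    have hz : eProj p q V R r (Θ z) = eProj p q V R r (Θ 1) := by
      rw [map_one, map_one]
      change z ∈ ((eProj p q V R r).comp Θ).ker
      simp [z, hρ, Pi.mulSingle_eq_of_ne' h.1, Pi.mulSingle_eq_of_ne' h.2, ← Prod.one_eq_mk]
    have hz' : z ∈ ((vProj p q V R u).comp Θ).ker := by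
      simp [vProj_eq_of_eProj_eq hz hu]
    simp [z, hσ] at hz'
    cases hz'
  exact (Sym2.mem_and_mem_iff (σ.injective.ne (fst_ne_snd_of_mem hloop r))).mp
    ⟨hends _ (Sym2.mem_mk_left _ _), hends _ (Sym2.mem_mk_right _ _)⟩

theorem bijective_of_ker_eq (hloop : ∀ v : V, (v, v) ∉ R)
    (hσ : ∀ v, ((vProj p q V R v).comp Θ).ker = (vProj p q V R (σ v)).ker)
    (hρ : ∀ r, ((eProj p q V R r).comp Θ).ker = (eProj p q V R (ρ r)).ker)
    (hv : ∀ v, Surjective ((vProj p q V R v).comp Θ))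
    (hr : ∀ r, Surjective ((eProj p q V R r).comp Θ)) : Bijective Θ := by
  refine ⟨(injective_iff_map_eq_one Θ).mpr fun x hx => ext (fun w => ?_) (fun s => ?_), fun y => ?_⟩
  · have hx' : x ∈ ((vProj p q V R (σ.symm w)).comp Θ).ker := by simp [hx]
    simpa [hσ] using hx'
  · have hx' : x ∈ ((eProj p q V R (ρ.symm s)).comp Θ).ker := by simp [hx]
    simpa [hρ] using hx'
  choose xv hxv using fun v => hv v (vProj p q V R v y)
  choose xr hxr using fun r => hr r (eProj p q V R r y)
  have hends : ∀ s : R, ∀ w ∈ s(s.1.1, s.1.2),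
      vProj p q V R w (xr (ρ.symm s)) = vProj p q V R w (xv (σ.symm w)) := by
    intro s w hw
    obtain ⟨r, rfl⟩ := ρ.surjective s
    rw [sym2_eProj_eq_map Θ hloop hσ hρ] at hw
    have key : ∀ u ∈ s(r.1.1, r.1.2), vProj p q V R (σ u) (xr r) = vProj p q V R (σ u) (xv u) :=
      fun u hu => (MonoidHom.eq_iff_of_ker_eq (hσ u)).mp
        ((vProj_eq_of_eProj_eq (hxr r) hu).trans (hxv u).symm)
    rcases Sym2.mem_iff.mp hw with rfl | rfl <;> simpa using key _ (by simp)
  refine ⟨⟨(fun w => vProj p q V R w (xv (σ.symm w)), fun s => eProj p q V R s (xr (ρ.symm s))),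
    fun s => ?_⟩, ext (fun v => ?_) (fun r => ?_)⟩
  · change lamW p q (eProj p q V R s (xr (ρ.symm s))) = _
    rw [lamW_eProj, hends s _ (Sym2.mem_mk_left _ _), hends s _ (Sym2.mem_mk_right _ _)]
  · rw [← hxv v]
    refine (MonoidHom.eq_iff_of_ker_eq (hσ v)).mpr ?_
    change vProj p q V R (σ v) (xv (σ.symm (σ v))) = _
    rw [σ.symm_apply_apply]
  · rw [← hxr r]
    refine (MonoidHom.eq_iff_of_ker_eq (hρ r)).mpr ?_
    change eProj p q V R (ρ r) (xr (ρ.symm (ρ r))) = _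
    rw [ρ.symm_apply_apply]

end Endomorphisms

section Reconstruction

variable {p q : ℕ} {V : Type*} {R : Set (V × V)} {G : Type*} [Group G] {Nv : V → Subgroup G}
  {Mr : R → Subgroup G} [∀ v, (Nv v).Normal] [∀ r, (Mr r).Normal]
  (φv : ∀ v, ↥(GGamma p q V R) ⧸ (vProj p q V R v).ker ≃* G ⧸ Nv v)
  (φr : ∀ r, ↥(GGamma p q V R) ⧸ (eProj p q V R r).ker ≃* G ⧸ Mr r)
  (h : ∀ r g, lamW p q (homOfQuotientEquiv _ _ (φr r) g) =
    (homOfQuotientEquiv _ _ (φv r.1.1) g, homOfQuotientEquiv _ _ (φv r.1.2) g))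

open GGamma

def liftQuotientEquivs : G →* ↥(GGamma p q V R) :=
  lift (fun v => homOfQuotientEquiv _ _ (φv v)) (fun r => homOfQuotientEquiv _ _ (φr r)) h

theorem liftQuotientEquivs_eq_iff {g : G} {x : ↥(GGamma p q V R)} :
    liftQuotientEquivs φv φr h g = x ↔ (∀ v, φv v x = g) ∧ ∀ r, φr r x = g := by
  constructor
  · rintro rfl
    exact ⟨fun v => (homOfQuotientEquiv_eq_iff _ _).mp rfl,
      fun r => (homOfQuotientEquiv_eq_iff _ _).mp rfl⟩
  · rintro ⟨hv, hr⟩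
    exact ext (fun v => (homOfQuotientEquiv_eq_iff _ _).mpr (hv v))
      fun r => (homOfQuotientEquiv_eq_iff _ _).mpr (hr r)

theorem continuous_liftQuotientEquivs [TopologicalSpace G] [IsTopologicalGroup G] [NeZero p]
    [NeZero q] (hNv : ∀ v, IsClosed (Nv v : Set G)) (hMr : ∀ r, IsClosed (Mr r : Set G)) :
    Continuous (liftQuotientEquivs φv φr h) :=
  continuous_lift _
    (fun v => (homOfQuotientEquiv _ _ (φv v)).continuous_of_isClosed_ker <| by
      rw [ker_homOfQuotientEquiv]; exact hNv v)
    (fun r => (homOfQuotientEquiv _ _ (φr r)).continuous_of_isClosed_ker <| by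
      rw [ker_homOfQuotientEquiv]; exact hMr r)

theorem bijective_liftQuotientEquivs [TopologicalSpace G] [Fact (1 < q)] (hp : Odd p)
    (hp1 : p ≠ 1) (hcop : (2 * p).Coprime q)
    (hloop : ∀ v : V, (v, v) ∉ R) (hor : ∀ a b : V, (a, b) ∈ R → (b, a) ∉ R)
    (e : ↥(GGamma p q V R) ≃* G) (he : Continuous e) (he' : Continuous e.symm)
    (hNvinj : Injective Nv) (hNvrange : Set.range Nv = closedKernels G (DihedralGroup p))
    (hMrinj : Injective Mr) (hMrrange : Set.range Mr = closedKernels G (Wgrp p q)) :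
    Bijective (liftQuotientEquivs φv φr h) := by
  obtain ⟨σ, hσ⟩ := exists_equiv_of_range_eq ((Subgroup.comap_injective e.surjective).comp hNvinj)
    vProj_ker_injective ((range_comap_eq_closedKernels e he he' hNvrange).trans
      (range_vProj_ker hp hp1 hcop).symm)
  obtain ⟨ρ, hρ⟩ := exists_equiv_of_range_eq ((Subgroup.comap_injective e.surjective).comp hMrinj)
    eProj_ker_injective ((range_comap_eq_closedKernels e he he' hMrrange).trans
      (range_eProj_ker hp hp1 hcop hloop hor).symm)
  set Ψ := liftQuotientEquivs φv φr h
  have hΘ := bijective_of_ker_eq (Ψ.comp e.toMonoidHom) hloop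
    (fun v => by
      rw [← hσ v, comp_apply, ← ker_homOfQuotientEquiv _ (φv v), MonoidHom.comap_ker]; rfl)
    (fun r => by
      rw [← hρ r, comp_apply, ← ker_homOfQuotientEquiv _ (φr r), MonoidHom.comap_ker]; rfl)
    (fun v => (homOfQuotientEquiv_surjective _ _ (vProj_surjective v)).comp e.surjective)
    (fun r => (homOfQuotientEquiv_surjective _ _
      (eProj_surjective (fst_ne_snd_of_mem hloop r))).comp e.surjective)
  have hcomp : ⇑Ψ = ⇑(Ψ.comp e.toMonoidHom) ∘ e.symm := funext fun g => by simp
  exact hcomp ▸ hΘ.comp e.symm.bijective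

end Reconstruction

/-- Let `Γ = (V, R)` be a graph and `G` a profinite group topologically
isomorphic to `G_Γ`.  Suppose given bijections `v ↦ N_v` onto the closed normal subgroups
with quotient `≅ D_p`, and `r ↦ M_r` onto those with quotient `≅ W`, together with
isomorphisms `φ_v : G_Γ/ker π_v ≃ G/N_v` and `φ_r : G_Γ/ker π_r ≃ G/M_r` such that
`M_r ⊆ N_v ∩ N_{v'}` for `r = (v,v')` and the canonical squares commute.  Then there is a
unique continuous isomorphism `φ : G_Γ → G` inducing every `φ_v` and every `φ_r`. -/
theorem statement_15 (p q : ℕ) (hp : p.Prime) (hq : q.Prime) (hpo : Odd p) (hqo : Odd q)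
    (hpq : p ≠ q) (V : Type) (R : Set (V × V))
    (hloop : ∀ v : V, (v, v) ∉ R) (hor : ∀ a b : V, (a, b) ∈ R → (b, a) ∉ R)
    (G : Type) [Group G] [TopologicalSpace G] [IsTopologicalGroup G] [CompactSpace G]
    (hiso : ∃ e : ↥(GGamma p q V R) ≃* G, Continuous ⇑e ∧ Continuous ⇑e.symm)
    (Nv : V → Subgroup G) (Mr : R → Subgroup G)
    [hNvn : ∀ v, (Nv v).Normal] [hMrn : ∀ r, (Mr r).Normal]
    (hNvinj : Function.Injective Nv)
    (hNvrange : Set.range Nv = {N : Subgroup G | IsClosed (N : Set G) ∧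
      ∃ ψ : G →* DihedralGroup p, Function.Surjective ψ ∧ ψ.ker = N})
    (hMrinj : Function.Injective Mr)
    (hMrrange : Set.range Mr = {M : Subgroup G | IsClosed (M : Set G) ∧
      ∃ ψ : G →* Wgrp p q, Function.Surjective ψ ∧ ψ.ker = M})
    (φv : ∀ v : V, (↥(GGamma p q V R) ⧸ (vProj p q V R v).ker) ≃* (G ⧸ Nv v))
    (φr : ∀ r : R, (↥(GGamma p q V R) ⧸ (eProj p q V R r).ker) ≃* (G ⧸ Mr r))
    (hle : ∀ r : R, Mr r ≤ Nv (r : V × V).1 ⊓ Nv (r : V × V).2)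
    (hsq1 : ∀ (r : R) (x : ↥(GGamma p q V R)),
      QuotientGroup.map (Mr r) (Nv (r : V × V).1) (MonoidHom.id G)
        (by rw [Subgroup.comap_id]; exact (hle r).trans inf_le_left)
        (φr r (QuotientGroup.mk x)) = φv (r : V × V).1 (QuotientGroup.mk x))
    (hsq2 : ∀ (r : R) (x : ↥(GGamma p q V R)),
      QuotientGroup.map (Mr r) (Nv (r : V × V).2) (MonoidHom.id G)
        (by rw [Subgroup.comap_id]; exact (hle r).trans inf_le_right)
        (φr r (QuotientGroup.mk x)) = φv (r : V × V).2 (QuotientGroup.mk x)) :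
    ∃! φ : ↥(GGamma p q V R) ≃* G,
      Continuous ⇑φ ∧
      (∀ (v : V) (x : ↥(GGamma p q V R)),
        φv v (QuotientGroup.mk x) = QuotientGroup.mk (φ x)) ∧
      (∀ (r : R) (x : ↥(GGamma p q V R)),
        φr r (QuotientGroup.mk x) = QuotientGroup.mk (φ x)) := by
  obtain ⟨e, he, he'⟩ := hiso
  have : Fact (1 < q) := ⟨hq.one_lt⟩
  have : NeZero p := ⟨hp.ne_zero⟩
  have hcop : (2 * p).Coprime q :=
    Nat.Coprime.mul_left (Nat.coprime_two_left.mpr hqo) ((Nat.coprime_primes hp hq).mpr hpq)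
  set Ψ := liftQuotientEquivs φv φr fun r g => Prod.ext
    (map_homOfQuotientEquiv _ _ (κ := lamFst p q)
      (fun x => congrArg Prod.fst (GGamma.lamW_eProj x r)) _ (hsq1 r) g)
    (map_homOfQuotientEquiv _ _ (κ := lamSnd p q)
      (fun x => congrArg Prod.snd (GGamma.lamW_eProj x r)) _ (hsq2 r) g)
  have hΨ : Bijective Ψ := bijective_liftQuotientEquivs φv φr _ hpo hp.ne_one hcop hloop hor
    e he he' hNvinj hNvrange hMrinj hMrrange
  have hΨc : Continuous Ψ := continuous_liftQuotientEquivs φv φr _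
    (fun v => (hNvrange.subset (Set.mem_range_self v)).1)
    (fun r => (hMrrange.subset (Set.mem_range_self r)).1)
  have hinv : ∀ x, Ψ ((MulEquiv.ofBijective Ψ hΨ).symm x) = x :=
    (MulEquiv.ofBijective Ψ hΨ).apply_symm_apply
  refine ⟨(MulEquiv.ofBijective Ψ hΨ).symm,
    ⟨(hΨc.homeoOfEquivCompactToT2 (f := Equiv.ofBijective Ψ hΨ)).symm.continuous,
      fun v x => ((liftQuotientEquivs_eq_iff _ _ _).mp (hinv x)).1 v,
      fun r x => ((liftQuotientEquivs_eq_iff _ _ _).mp (hinv x)).2 r⟩,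
    fun φ ⟨_, h₁, h₂⟩ => MulEquiv.ext fun x => hΨ.1 ?_⟩
  rw [hinv, liftQuotientEquivs_eq_iff]
  exact ⟨fun v => h₁ v x, fun r => h₂ r x⟩
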